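/- Let I ⊆ ℝ[x₁,…,xₙ] be a binomial ideal and let I^e = I·ℂ[x₁,…,xₙ] denote its extension to ℂ[x₁,…,xₙ]. Then at most one minimal prime of I^e has a zero in the open positive orthant: if 𝔭₁ and 𝔭₂ are minimal primes of I^e with V(𝔭₁) ∩ ℝ_{>0}ⁿ ≠ ∅ and V(𝔭₂) ∩ ℝ_{>0}ⁿ ≠ ∅, then 𝔭₁ = 𝔭₂. -/

import Mathlib

noncomputable section

open MvPolynomial
open scoped Classical

namespace BinUnique

variable {n : ℕ}

/-- embed an exponent vector into `Fin n → ℤ` -/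
def ea (a : Fin n →₀ ℕ) : Fin n → ℤ := fun i => (a i : ℤ)

lemma ea_sub_ea_add (a b : Fin n →₀ ℕ) : ea a - ea b + ea b = ea a := by ring

/-- power of a unit tuple by an integer vector -/
def wpow (w : Fin n → ℂˣ) (m : Fin n → ℤ) : ℂˣ := ∏ i, w i ^ (m i)

lemma wpow_add (w : Fin n → ℂˣ) (m m' : Fin n → ℤ) :
    wpow w (m + m') = wpow w m * wpow w m' := by
  simp [wpow, zpow_add, Finset.prod_mul_distrib]

lemma wpow_zero (w : Fin n → ℂˣ) : wpow w 0 = 1 := by simp [wpow]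

lemma wpow_smul (w : Fin n → ℂˣ) (k : ℤ) (m : Fin n → ℤ) :
    wpow w (k • m) = wpow w m ^ k := by
  rw [wpow, wpow, ← Finset.prod_zpow]
  exact Finset.prod_congr rfl (fun i _ => by
    rw [← zpow_mul, Pi.smul_apply, smul_eq_mul, mul_comm])

lemma wpow_sub (w : Fin n → ℂˣ) (m m' : Fin n → ℤ) :
    wpow w (m - m') = wpow w m / wpow w m' := by
  rw [wpow, wpow, wpow, ← Finset.prod_div_distrib]
  exact Finset.prod_congr rfl (fun i _ => by rw [Pi.sub_apply, zpow_sub, div_eq_mul_inv])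

lemma wpow_mul_base (w w' : Fin n → ℂˣ) (m : Fin n → ℤ) :
    wpow (w * w') m = wpow w m * wpow w' m := by
  simp [wpow, mul_zpow, Finset.prod_mul_distrib]

lemma wpow_div_base (w w' : Fin n → ℂˣ) (m : Fin n → ℤ) :
    wpow (w / w') m = wpow w m / wpow w' m := by
  simp [wpow, div_zpow, Finset.prod_div_distrib]

/-- the submodule of vectors where `wpow` takes value 1. -/
def eqOne (w : Fin n → ℂˣ) : Submodule ℤ (Fin n → ℤ) where
  carrier := {m | wpow w m = 1}
  add_mem' := by intro x y hx hy; simp only [Set.mem_setOf_eq] at *; rw [wpow_add, hx, hy, mul_one]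
  zero_mem' := wpow_zero w
  smul_mem' := by intro k x hx; simp only [Set.mem_setOf_eq] at *; rw [wpow_smul, hx, one_zpow]

lemma eval_monomial_units (w : Fin n → ℂˣ) (a : Fin n →₀ ℕ) (c : ℂ) :
    eval (fun i => (w i : ℂ)) (monomial a c) = c * ((wpow w (ea a) : ℂˣ) : ℂ) := by
  rw [eval_monomial]
  congr 1
  rw [Finsupp.prod_fintype]
  · push_cast [wpow, ea]
    norm_num
  · intro i; simp

/-- saturation -/
def sat (L : Submodule ℤ (Fin n → ℤ)) : Submodule ℤ (Fin n → ℤ) where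
  carrier := {m | ∃ k : ℕ, 0 < k ∧ (k : ℤ) • m ∈ L}
  add_mem' := by
    rintro x y ⟨k, hk, hkx⟩ ⟨l, hl, hly⟩
    refine ⟨k * l, Nat.mul_pos hk hl, ?_⟩
    have : ((k * l : ℕ) : ℤ) • (x + y) = (l : ℤ) • ((k:ℤ) • x) + (k : ℤ) • ((l:ℤ) • y) := by
      push_cast; module
    rw [this]
    exact Submodule.add_mem _ (Submodule.smul_mem _ _ hkx) (Submodule.smul_mem _ _ hly)
  zero_mem' := ⟨1, one_pos, by simp⟩
  smul_mem' := by
    rintro c x ⟨k, hk, hkx⟩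
    refine ⟨k, hk, ?_⟩
    have : ((k : ℤ)) • (c • x) = c • ((k:ℤ) • x) := smul_comm _ _ _
    rw [this]
    exact Submodule.smul_mem _ _ hkx

lemma le_sat (L : Submodule ℤ (Fin n → ℤ)) : L ≤ sat L :=
  fun m hm => ⟨1, one_pos, by simpa using hm⟩

lemma sat_saturated {L : Submodule ℤ (Fin n → ℤ)} {c : ℤ} {m : Fin n → ℤ}
    (hc : c ≠ 0) (h : c • m ∈ sat L) : m ∈ sat L := by
  obtain ⟨k, hk, hkm⟩ := h
  obtain ⟨k', hk', hk'c⟩ : ∃ k' : ℕ, 0 < k' ∧ ((k' : ℤ) = c ∨ (k' : ℤ) = -c) := by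
    rcases lt_or_gt_of_ne hc with h | h
    · exact ⟨(-c).toNat, by omega, Or.inr (by omega)⟩
    · exact ⟨c.toNat, by omega, Or.inl (by omega)⟩
  refine ⟨k * k', Nat.mul_pos hk hk', ?_⟩
  have hkm' : ((k : ℤ) * c) • m ∈ L := by rwa [← smul_smul]
  rcases hk'c with h1 | h1
  · have : ((k * k' : ℕ) : ℤ) • m = ((k : ℤ) * c) • m := by push_cast; rw [h1]
    rw [this]; exact hkm'
  · have : ((k * k' : ℕ) : ℤ) • m = -(((k : ℤ) * c) • m) := by
      push_cast; rw [h1]; module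
    rw [this]; exact Submodule.neg_mem _ hkm'

instance (L : Submodule ℤ (Fin n → ℤ)) : NoZeroSMulDivisors ℤ ((Fin n → ℤ) ⧸ sat L) := by
  constructor
  intro c x h
  by_cases hc : c = 0
  · exact Or.inl hc
  · right
    obtain ⟨m, rfl⟩ := Submodule.Quotient.mk_surjective _ x
    rw [← Submodule.Quotient.mk_smul, Submodule.Quotient.mk_eq_zero] at h
    rw [Submodule.Quotient.mk_eq_zero]
    exact sat_saturated hc h

instance (L : Submodule ℤ (Fin n → ℤ)) : UniqueSums ((Fin n → ℤ) ⧸ sat L) := by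
  have b := Module.Free.chooseBasis ℤ ((Fin n → ℤ) ⧸ sat L)
  exact UniqueSums.of_injective_addHom b.repr.toLinearMap.toAddMonoidHom.toAddHom
    b.repr.injective inferInstance

instance (L : Submodule ℤ (Fin n → ℤ)) : IsDomain (AddMonoidAlgebra ℂ ((Fin n → ℤ) ⧸ sat L)) :=
  NoZeroDivisors.to_isDomain _

/-- the twisted monomial map -/
def Phi (L : Submodule ℤ (Fin n → ℤ)) (w : Fin n → ℂˣ) :
    MvPolynomial (Fin n) ℂ →+* AddMonoidAlgebra ℂ ((Fin n → ℤ) ⧸ sat L) :=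
  eval₂Hom AddMonoidAlgebra.singleZeroRingHom
    (fun i => AddMonoidAlgebra.single (Submodule.Quotient.mk (ea (Finsupp.single i 1))) ((w i : ℂ)))

lemma mkQ_ea (L : Submodule ℤ (Fin n → ℤ)) (a : Fin n →₀ ℕ) :
    (Submodule.Quotient.mk (ea a) : (Fin n → ℤ) ⧸ sat L)
      = ∑ i, ((a i : ℤ)) • (Submodule.Quotient.mk (ea (Finsupp.single i 1))) := by
  have h1 : ea a = ∑ i, ((a i : ℤ)) • ea (Finsupp.single i (1:ℕ)) := by
    funext j
    rw [Finset.sum_apply]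
    simp only [ea, Pi.smul_apply, Finsupp.single_apply, smul_eq_mul]
    rw [Finset.sum_eq_single j]
    · simp
    · intro b _ hb; simp [hb]
    · simp
  have : (Submodule.Quotient.mk (ea a) : (Fin n → ℤ) ⧸ sat L) = (sat L).mkQ (ea a) := rfl
  rw [this, h1, map_sum]
  exact Finset.sum_congr rfl fun i _ => by rw [map_smul]; rfl

lemma Phi_monomial (L : Submodule ℤ (Fin n → ℤ)) (w : Fin n → ℂˣ) (a : Fin n →₀ ℕ) (c : ℂ) :
    Phi L w (monomial a c)
      = AddMonoidAlgebra.single (Submodule.Quotient.mk (ea a)) (c * ((wpow w (ea a) : ℂˣ) : ℂ)) := by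
  have h0 : Phi L w (monomial a c) = AddMonoidAlgebra.single 0 c
      * a.prod (fun i e => (AddMonoidAlgebra.single
          ((Submodule.Quotient.mk (ea (Finsupp.single i 1))) : (Fin n → ℤ) ⧸ sat L) ((w i : ℂ)))^e) := by
    rw [Phi, eval₂Hom_monomial]; rfl
  rw [h0, Finsupp.prod_fintype _ _ (fun i => pow_zero _)]
  have h1 : ∀ i : Fin n, (AddMonoidAlgebra.single
        ((Submodule.Quotient.mk (ea (Finsupp.single i 1))) : (Fin n → ℤ) ⧸ sat L) ((w i : ℂ)))^(a i)
      = AddMonoidAlgebra.single ((a i) • (Submodule.Quotient.mk (ea (Finsupp.single i 1)))) ((w i : ℂ)^(a i)) :=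
    fun i => AddMonoidAlgebra.single_pow _ _ _
  simp only [h1]
  rw [AddMonoidAlgebra.prod_single, AddMonoidAlgebra.single_mul_single, zero_add]
  congr 1
  · rw [mkQ_ea]
    exact Finset.sum_congr rfl fun i _ => by rw [Nat.cast_smul_eq_nsmul]
  · congr 1
    rw [wpow, ← Units.coeHom_apply, map_prod]
    push_cast [ea]
    rfl


lemma Phi_eq_sum (L : Submodule ℤ (Fin n → ℤ)) (w : Fin n → ℂˣ) (f : MvPolynomial (Fin n) ℂ) :
    Phi L w f = ∑ a ∈ f.support, AddMonoidAlgebra.single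
      ((Submodule.Quotient.mk (ea a)) : (Fin n → ℤ) ⧸ sat L)
      (coeff a f * ((wpow w (ea a) : ℂˣ) : ℂ)) := by
  conv_lhs => rw [f.as_sum]
  rw [map_sum]
  exact Finset.sum_congr rfl fun a _ => Phi_monomial L w a _

lemma Phi_apply (L : Submodule ℤ (Fin n → ℤ)) (w : Fin n → ℂˣ) (f : MvPolynomial (Fin n) ℂ)
    (κ : (Fin n → ℤ) ⧸ sat L) :
    (Phi L w f).coeff κ = ∑ a ∈ f.support.filter
        (fun a => ((Submodule.Quotient.mk (ea a)) : (Fin n → ℤ) ⧸ sat L) = κ),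
      coeff a f * ((wpow w (ea a) : ℂˣ) : ℂ) := by
  rw [Phi_eq_sum, Finset.sum_filter]
  rw [AddMonoidAlgebra.coeff_sum, Finsupp.finset_sum_apply]
  exact Finset.sum_congr rfl fun a _ => Finsupp.single_apply

lemma fiber_sum (L : Submodule ℤ (Fin n → ℤ)) (w : Fin n → ℂˣ) (f : MvPolynomial (Fin n) ℂ)
    (h : Phi L w f = 0) (κ : (Fin n → ℤ) ⧸ sat L) :
    ∑ a ∈ f.support.filter
        (fun a => ((Submodule.Quotient.mk (ea a)) : (Fin n → ℤ) ⧸ sat L) = κ),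
      coeff a f * ((wpow w (ea a) : ℂˣ) : ℂ) = 0 := by
  rw [← Phi_apply, h]; rfl

lemma twist (L : Submodule ℤ (Fin n → ℤ)) (w w' : Fin n → ℂˣ) (f : MvPolynomial (Fin n) ℂ)
    (h : ∀ m ∈ sat L, wpow w' m = wpow w m) (h0 : Phi L w f = 0) : Phi L w' f = 0 := by
  ext κ
  rw [Phi_apply]
  rcases Finset.eq_empty_or_nonempty (f.support.filter
      (fun a => ((Submodule.Quotient.mk (ea a)) : (Fin n → ℤ) ⧸ sat L) = κ)) with he | ⟨a₀, ha₀⟩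
  · rw [he, Finset.sum_empty]; rfl
  · have key : ∀ a ∈ f.support.filter
        (fun a => ((Submodule.Quotient.mk (ea a)) : (Fin n → ℤ) ⧸ sat L) = κ),
        ((wpow w' (ea a) : ℂˣ) : ℂ)
          = (((wpow w (ea a₀))⁻¹ * wpow w' (ea a₀) : ℂˣ) : ℂ) * ((wpow w (ea a) : ℂˣ) : ℂ) := by
      intro a ha
      have hmk : ((Submodule.Quotient.mk (ea a)) : (Fin n → ℤ) ⧸ sat L)
          = Submodule.Quotient.mk (ea a₀) := by
        rw [(Finset.mem_filter.1 ha).2, (Finset.mem_filter.1 ha₀).2]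
      have hd : ea a - ea a₀ ∈ sat L := (Submodule.Quotient.eq _).1 hmk
      have h1 : wpow w' (ea a) = wpow w' (ea a - ea a₀) * wpow w' (ea a₀) := by
        rw [← wpow_add]; congr 1; ring
      have h2 : wpow w' (ea a - ea a₀) = wpow w (ea a - ea a₀) := h _ hd
      rw [h1, h2, wpow_sub]
      push_cast
      ring
    rw [Finset.sum_congr rfl (fun a ha => by rw [key a ha])]
    have : ∑ a ∈ f.support.filter
        (fun a => ((Submodule.Quotient.mk (ea a)) : (Fin n → ℤ) ⧸ sat L) = κ),
        coeff a f * ((((wpow w (ea a₀))⁻¹ * wpow w' (ea a₀) : ℂˣ) : ℂ) * ((wpow w (ea a) : ℂˣ) : ℂ))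
        = (((wpow w (ea a₀))⁻¹ * wpow w' (ea a₀) : ℂˣ) : ℂ) * ∑ a ∈ f.support.filter
        (fun a => ((Submodule.Quotient.mk (ea a)) : (Fin n → ℤ) ⧸ sat L) = κ),
        coeff a f * ((wpow w (ea a) : ℂˣ) : ℂ) := by
      rw [Finset.mul_sum]
      exact Finset.sum_congr rfl fun a _ => by ring
    rw [this, fiber_sum L w f h0 κ, mul_zero]
    rfl

lemma eval_eq_sum_units (w : Fin n → ℂˣ) (f : MvPolynomial (Fin n) ℂ) :
    eval (fun i => (w i : ℂ)) f = ∑ a ∈ f.support, coeff a f * ((wpow w (ea a) : ℂˣ) : ℂ) := by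
  conv_lhs => rw [f.as_sum]
  rw [map_sum]
  exact Finset.sum_congr rfl fun a _ => eval_monomial_units w a _

lemma eval_from_ker (L : Submodule ℤ (Fin n → ℤ)) (w w' : Fin n → ℂˣ)
    (f : MvPolynomial (Fin n) ℂ)
    (h : ∀ m ∈ sat L, wpow w' m = wpow w m) (h0 : Phi L w f = 0) :
    eval (fun i => (w' i : ℂ)) f = 0 := by
  have h0' : Phi L w' f = 0 := twist L w w' f h h0
  rw [eval_eq_sum_units]
  rw [← Finset.sum_fiberwise_of_maps_to
    (g := fun a => ((Submodule.Quotient.mk (ea a)) : (Fin n → ℤ) ⧸ sat L))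
    (t := f.support.image (fun a => ((Submodule.Quotient.mk (ea a)) : (Fin n → ℤ) ⧸ sat L)))
    (fun a ha => Finset.mem_image_of_mem _ ha)]
  exact Finset.sum_eq_zero fun κ _ => fiber_sum L w' f h0' κ

lemma bin_struct (g : MvPolynomial (Fin n) ℂ) (hcard : g.support.card ≤ 2)
    (w : Fin n → ℂˣ) (hvan : eval (fun i => (w i : ℂ)) g = 0) :
    g = 0 ∨ ∃ (a b : Fin n →₀ ℕ) (c e : ℂ), c ≠ 0 ∧ e ≠ 0 ∧ a ≠ b ∧
      g = monomial a c + monomial b e := by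
  interval_cases h : g.support.card
  · exact Or.inl (support_eq_empty.1 (Finset.card_eq_zero.1 h))
  · exfalso
    obtain ⟨a, ha⟩ := Finset.card_eq_one.1 h
    have hg : g = monomial a (coeff a g) := by
      conv_lhs => rw [g.as_sum]
      rw [ha, Finset.sum_singleton]
    have hca : coeff a g ≠ 0 := by
      apply mem_support_iff.1
      rw [ha]; exact Finset.mem_singleton_self a
    rw [hg, eval_monomial_units] at hvan
    exact hca (by
      rcases mul_eq_zero.1 hvan with h' | h'
      · exact h'
      · exact absurd h' (Units.ne_zero _))
  · obtain ⟨a, b, hab, hs⟩ := Finset.card_eq_two.1 h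
    refine Or.inr ⟨a, b, coeff a g, coeff b g, ?_, ?_, hab, ?_⟩
    · apply mem_support_iff.1; rw [hs]; simp
    · apply mem_support_iff.1; rw [hs]; simp
    · conv_lhs => rw [g.as_sum]
      rw [hs, Finset.sum_pair hab]

lemma eval_binom (w : Fin n → ℂˣ) (a b : Fin n →₀ ℕ) (c e : ℂ) :
    eval (fun i => (w i : ℂ)) (monomial a c + monomial b e)
      = c * ((wpow w (ea a) : ℂˣ) : ℂ) + e * ((wpow w (ea b) : ℂˣ) : ℂ) := by
  rw [map_add, eval_monomial_units, eval_monomial_units]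

lemma binom_wpow_eq {a b : Fin n →₀ ℕ} {c e : ℂ} (hc : c ≠ 0) (u v : Fin n → ℂˣ)
    (hu : eval (fun i => (u i : ℂ)) (monomial a c + monomial b e) = 0)
    (hv : eval (fun i => (v i : ℂ)) (monomial a c + monomial b e) = 0) :
    wpow u (ea a - ea b) = wpow v (ea a - ea b) := by
  rw [eval_binom] at hu hv
  have key : ∀ x : Fin n → ℂˣ,
      c * ((wpow x (ea a) : ℂˣ) : ℂ) + e * ((wpow x (ea b) : ℂˣ) : ℂ) = 0 →
      ((wpow x (ea a - ea b) : ℂˣ) : ℂ) = -e / c := by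
    intro x hx
    have hb : ((wpow x (ea b) : ℂˣ) : ℂ) ≠ 0 := Units.ne_zero _
    rw [wpow_sub]
    push_cast
    rw [div_eq_div_iff hb hc]
    linear_combination hx
  exact Units.ext (by rw [key u hu, key v hv])

/-- positive part of an integer vector, as an exponent -/
def posPart (m : Fin n → ℤ) : Fin n →₀ ℕ :=
  Finsupp.equivFunOnFinite.symm (fun i => (m i).toNat)

lemma ea_posPart_sub (m : Fin n → ℤ) : ea (posPart m) - ea (posPart (-m)) = m := by
  funext i
  simp only [ea, posPart, Pi.sub_apply, Finsupp.coe_equivFunOnFinite_symm, Pi.neg_apply]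
  omega

lemma ker_binom (L : Submodule ℤ (Fin n → ℤ)) (w : Fin n → ℂˣ) {m : Fin n → ℤ}
    (hm : m ∈ sat L) :
    Phi L w (monomial (posPart m) 1
      - monomial (posPart (-m)) ((wpow w m : ℂˣ) : ℂ)) = 0 := by
  rw [map_sub, Phi_monomial, Phi_monomial]
  have hκ : (Submodule.Quotient.mk (ea (posPart m)) : (Fin n → ℤ) ⧸ sat L)
      = Submodule.Quotient.mk (ea (posPart (-m))) := by
    rw [Submodule.Quotient.eq]
    rw [show ea (posPart m) - ea (posPart (-m)) = m from ea_posPart_sub m]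
    exact hm
  rw [hκ, ← AddMonoidAlgebra.single_sub]
  convert AddMonoidAlgebra.single_zero _
  · rfl
  have : wpow w (ea (posPart m)) = wpow w m * wpow w (ea (posPart (-m))) := by
    rw [← wpow_add]
    congr 1
    exact eq_add_of_sub_eq (ea_posPart_sub m)
  rw [this]
  push_cast
  ring

lemma pos_unit_root {x : ℂˣ} (hx : ∃ r : ℝ, 0 < r ∧ (x : ℂ) = r) {k : ℕ} (hk : 0 < k)
    (h : x ^ k = 1) : x = 1 := by
  obtain ⟨r, hr, hxr⟩ := hx
  have hxk : ((x : ℂ)) ^ k = 1 := by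
    have := congrArg (fun y : ℂˣ => (y : ℂ)) h
    simpa using this
  have hrk : (r : ℂ) ^ k = 1 := by rw [← hxr]; exact hxk
  have hrk' : r ^ k = 1 := by exact_mod_cast hrk
  have : r = 1 := by
    rcases lt_trichotomy r 1 with h' | h' | h'
    · have := pow_lt_one₀ (le_of_lt hr) h' hk.ne'
      linarith
    · exact h'
    · have := one_lt_pow₀ h' hk.ne'
      linarith
  apply Units.ext
  rw [hxr, this]
  norm_num

lemma wpow_root_finite (d : ℕ) (hd : 0 < d) : {x : ℂˣ | x ^ d = 1}.Finite := by
  have h1 : {y : ℂ | y ^ d = 1}.Finite := by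
    have hsub : {y : ℂ | y ^ d = 1} ⊆ ((Polynomial.nthRoots d (1 : ℂ)).toFinset : Finset ℂ) := by
      intro y hy
      simp only [Finset.coe_sort_coe, Multiset.mem_toFinset, Finset.mem_coe]
      rw [Polynomial.mem_nthRoots hd]
      exact hy
    exact Set.Finite.subset (Set.finite_mem_finset _) hsub
  apply Set.Finite.of_finite_image (f := fun x : ℂˣ => (x : ℂ))
  · apply h1.subset
    rintro y ⟨x, hx, rfl⟩
    have : ((x ^ d : ℂˣ) : ℂ) = 1 := by rw [hx]; rfl
    simpa using this
  · exact fun a _ b _ hab => Units.ext hab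

lemma exists_reps (L : Submodule ℤ (Fin n → ℤ)) :
    ∃ S : Finset (Fin n → ℂˣ),
      ∀ v : Fin n → ℂˣ, (∀ m ∈ L, wpow v m = 1) →
        ∃ v₀ ∈ S, ∀ m ∈ sat L, wpow v₀ m = wpow v m := by
  obtain ⟨G, hG⟩ := IsNoetherian.noetherian (sat L)
  -- choose multipliers
  have hGsat : ∀ g ∈ G, (g : Fin n → ℤ) ∈ sat L := by
    intro g hg
    rw [← hG]
    exact Submodule.subset_span hg
  classical
  set k : (Fin n → ℤ) → ℕ := fun g =>
    if h : ∃ j : ℕ, 0 < j ∧ (j : ℤ) • g ∈ L then h.choose else 1 with hk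
  have hkpos : ∀ g ∈ G, 0 < k g := by
    intro g hg
    obtain ⟨j, hj, hjL⟩ := hGsat g hg
    rw [hk]
    simp only [dif_pos (⟨j, hj, hjL⟩ : ∃ j : ℕ, 0 < j ∧ (j : ℤ) • g ∈ L)]
    exact (Exists.choose_spec (⟨j, hj, hjL⟩ : ∃ j : ℕ, 0 < j ∧ (j : ℤ) • g ∈ L)).1
  have hkL : ∀ g ∈ G, ((k g : ℤ)) • g ∈ L := by
    intro g hg
    obtain ⟨j, hj, hjL⟩ := hGsat g hg
    rw [hk]
    simp only [dif_pos (⟨j, hj, hjL⟩ : ∃ j : ℕ, 0 < j ∧ (j : ℤ) • g ∈ L)]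
    exact (Exists.choose_spec (⟨j, hj, hjL⟩ : ∃ j : ℕ, 0 < j ∧ (j : ℤ) • g ∈ L)).2
  set d : ℕ := ∏ g ∈ G, k g with hd
  have hdpos : 0 < d := Finset.prod_pos hkpos
  set TL : Set (Fin n → ℂˣ) := {v | ∀ m ∈ L, wpow v m = 1} with hTL
  -- on TL, wpow at elements of G is a d-th root of unity
  have hroot : ∀ v ∈ TL, ∀ g ∈ G, (wpow v g) ^ d = 1 := by
    intro v hv g hg
    have h1 : (wpow v g) ^ (k g) = 1 := by
      have h2 := hv _ (hkL g hg)
      rw [wpow_smul] at h2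
      rw [← zpow_natCast]
      exact h2
    obtain ⟨c, hc⟩ := Finset.dvd_prod_of_mem k hg
    rw [← hd] at hc
    rw [hc, pow_mul, h1, one_pow]
  -- the invariant map
  set Θ : (Fin n → ℂˣ) → ({x // x ∈ G} → ℂˣ) := fun v => fun g => wpow v g.val with hΘ
  have himg : (Θ '' TL).Finite := by
    apply Set.Finite.subset (Set.Finite.pi (fun g : {x // x ∈ G} => wpow_root_finite d hdpos))
    rintro F ⟨v, hv, rfl⟩
    rw [Set.mem_univ_pi]
    intro g
    exact hroot v hv g.val g.2
  refine ⟨himg.toFinset.image (fun F => if h : ∃ u, u ∈ TL ∧ Θ u = F then h.choose else 1), ?_⟩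
  intro v hv
  have hvTL : v ∈ TL := hv
  have hx : ∃ u, u ∈ TL ∧ Θ u = Θ v := ⟨v, hvTL, rfl⟩
  refine ⟨_, Finset.mem_image_of_mem _ (himg.mem_toFinset.2 ⟨v, hvTL, rfl⟩), ?_⟩
  beta_reduce
  rw [dif_pos hx]
  obtain ⟨hu1, hu2⟩ := hx.choose_spec
  intro m hm
  have hm' : m ∈ Submodule.span ℤ (G : Set (Fin n → ℤ)) := by rw [hG]; exact hm
  have hsub : Submodule.span ℤ (G : Set (Fin n → ℤ)) ≤ eqOne (hx.choose / v) := by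
    rw [Submodule.span_le]
    intro g hg
    have hΘg : wpow hx.choose g = wpow v g := congrFun hu2 ⟨g, Finset.mem_coe.1 hg⟩
    show wpow (hx.choose / v) g = 1
    rw [wpow_div_base, hΘg, div_self']
  have h1 : wpow (hx.choose / v) m = 1 := hsub hm'
  rw [wpow_div_base] at h1
  exact div_eq_one.1 h1

lemma wpow_pos_real (τ : Fin n → ℂˣ) (r : Fin n → ℝ) (hr : ∀ i, 0 < r i)
    (hτv : ∀ i, ((τ i : ℂˣ) : ℂ) = r i) (m : Fin n → ℤ) :
    ∃ ρ : ℝ, 0 < ρ ∧ ((wpow τ m : ℂˣ) : ℂ) = ρ := by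
  refine ⟨∏ i, r i ^ (m i), Finset.prod_pos (fun i _ => zpow_pos (hr i) _), ?_⟩
  rw [wpow, ← Units.coeHom_apply, map_prod]
  push_cast
  exact Finset.prod_congr rfl fun i _ => by rw [Units.coeHom_apply, ← hτv i]; push_cast; rfl

theorem key (B : Set (MvPolynomial (Fin n) ℂ))
    (hB : ∀ g ∈ B, g.support.card ≤ 2)
    (P₁ P₂ : Ideal (MvPolynomial (Fin n) ℂ))
    (hP₁ : P₁ ∈ (Ideal.span B).minimalPrimes) (hP₂ : P₂ ∈ (Ideal.span B).minimalPrimes)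
    (u₁ u₂ : Fin n → ℂˣ)
    (r : Fin n → ℝ) (hr : ∀ i, 0 < r i)
    (hreal : ∀ i, (((u₂ i / u₁ i : ℂˣ)) : ℂ) = r i)
    (hv₁ : ∀ g ∈ P₁, eval (fun i => ((u₁ i : ℂˣ) : ℂ)) g = 0)
    (hv₂ : ∀ g ∈ P₂, eval (fun i => ((u₂ i : ℂˣ) : ℂ)) g = 0) :
    P₁ = P₂ := by
  have hP₁p : P₁.IsPrime := hP₁.1.1
  have hP₂p : P₂.IsPrime := hP₂.1.1
  have hBP₁ : Ideal.span B ≤ P₁ := hP₁.1.2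
  have hBP₂ : Ideal.span B ≤ P₂ := hP₂.1.2
  have hvB₁ : ∀ g ∈ B, eval (fun i => ((u₁ i : ℂˣ) : ℂ)) g = 0 :=
    fun g hg => hv₁ g (hBP₁ (Ideal.subset_span hg))
  have hvB₂ : ∀ g ∈ B, eval (fun i => ((u₂ i : ℂˣ) : ℂ)) g = 0 :=
    fun g hg => hv₂ g (hBP₂ (Ideal.subset_span hg))
  classical
  set D : Set (Fin n → ℤ) := {dd | ∃ a b c e, c ≠ 0 ∧ e ≠ 0 ∧ a ≠ b ∧
    (monomial a c + monomial b e) ∈ B ∧ dd = ea a - ea b} with hD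
  set L : Submodule ℤ (Fin n → ℤ) := Submodule.span ℤ D with hL
  have hgen : ∀ u : Fin n → ℂˣ, (∀ g ∈ B, eval (fun i => ((u i : ℂˣ) : ℂ)) g = 0) →
      ∀ m ∈ L, wpow u m = wpow u₁ m := by
    intro u hu m hm
    have hsub : L ≤ eqOne (u / u₁) := by
      rw [hL, Submodule.span_le]
      rintro dd ⟨a, b, c, e, hc, he, hab, hmem, rfl⟩
      have h1 : wpow u (ea a - ea b) = wpow u₁ (ea a - ea b) :=
        binom_wpow_eq hc u u₁ (hu _ hmem) (hvB₁ _ hmem)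
      show wpow (u / u₁) (ea a - ea b) = 1
      rw [wpow_div_base, h1, div_self']
    have h2 : wpow (u / u₁) m = 1 := hsub hm
    rw [wpow_div_base] at h2
    exact div_eq_one.1 h2
  have hτ : ∀ m ∈ sat L, wpow u₂ m = wpow u₁ m := by
    rintro m ⟨k, hk, hkm⟩
    have h1 : wpow u₂ ((k : ℤ) • m) = wpow u₁ ((k : ℤ) • m) := hgen u₂ hvB₂ _ hkm
    rw [wpow_smul, wpow_smul] at h1
    have h2 : (wpow (u₂ / u₁) m) ^ (k : ℤ) = 1 := by
      rw [wpow_div_base, div_zpow, h1, div_self']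
    have h3 : (wpow (u₂ / u₁) m) ^ k = 1 := by rw [← zpow_natCast]; exact h2
    have h4 : wpow (u₂ / u₁) m = 1 :=
      pos_unit_root (wpow_pos_real (u₂ / u₁) r hr (fun i => hreal i) m) hk h3
    rw [wpow_div_base] at h4
    exact div_eq_one.1 h4
  obtain ⟨S, hS⟩ := exists_reps L
  have main : ∀ (P : Ideal (MvPolynomial (Fin n) ℂ)), P.IsPrime → Ideal.span B ≤ P →
      ∀ u : Fin n → ℂˣ, (∀ g ∈ P, eval (fun i => ((u i : ℂˣ) : ℂ)) g = 0) →
      ∀ f, (∀ v₀ ∈ S, Phi L (u₁ * v₀) f = 0) → f ∈ P := by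
    intro P hPp hBP u hu f hf
    have hFvan : ((∏ i, X i) * f : MvPolynomial (Fin n) ℂ) ∈
        vanishingIdeal ℂ (zeroLocus ℂ (Ideal.span B)) := by
      simp only [mem_vanishingIdeal_iff, mem_zeroLocus_iff, coe_aeval_eq_eval]
      intro x hx
      rw [map_mul]
      by_cases hz : ∀ i, x i ≠ 0
      · set xu : Fin n → ℂˣ := fun i => Units.mk0 (x i) (hz i) with hxu
        have hxc : (fun i => ((xu i : ℂˣ) : ℂ)) = x := by funext i; rfl
        have hxB : ∀ g ∈ B, eval (fun i => ((xu i : ℂˣ) : ℂ)) g = 0 := by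
          intro g hg; rw [hxc]; exact hx g (Ideal.subset_span hg)
        have hxL : ∀ m ∈ L, wpow (xu / u₁) m = 1 := by
          intro m hm
          rw [wpow_div_base, hgen xu hxB m hm, div_self']
        obtain ⟨v₀, hv₀S, hv₀⟩ := hS (xu / u₁) hxL
        have hev : eval (fun i => (((u₁ * (xu / u₁)) i : ℂˣ) : ℂ)) f = 0 := by
          apply eval_from_ker L (u₁ * v₀) (u₁ * (xu / u₁)) f ?_ (hf v₀ hv₀S)
          intro m hm
          rw [wpow_mul_base, wpow_mul_base, hv₀ m hm]
        have hcancel : u₁ * (xu / u₁) = xu := mul_div_cancel _ _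
        rw [hcancel, hxc] at hev
        rw [show aeval x f = eval x f from rfl, hev, mul_zero]
      · push_neg at hz
        obtain ⟨i, hi⟩ := hz
        rw [map_prod, Finset.prod_eq_zero (Finset.mem_univ i) (by rw [aeval_X, hi]), zero_mul]
    rw [vanishingIdeal_zeroLocus_eq_radical] at hFvan
    have hFP : (∏ i, X i) * f ∈ P := hPp.radical_le_iff.2 hBP hFvan
    have hprod : (∏ i, (X i : MvPolynomial (Fin n) ℂ)) ∉ P := by
      intro hmem
      have h5 := hu _ hmem
      rw [map_prod] at h5
      simp only [eval_X] at h5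
      have h6 : (((∏ i, u i : ℂˣ)) : ℂ) = 0 := by
        rw [← Units.coeHom_apply, map_prod]
        exact h5
      exact Units.ne_zero _ h6
    exact (hPp.mem_or_mem hFP).resolve_left hprod
  have hQle : ∀ (P : Ideal (MvPolynomial (Fin n) ℂ)), P.IsPrime → Ideal.span B ≤ P →
      ∀ u : Fin n → ℂˣ, (∀ g ∈ P, eval (fun i => ((u i : ℂˣ) : ℂ)) g = 0) →
      (∀ m ∈ sat L, wpow u m = wpow u₁ m) →
      RingHom.ker (Phi L u₁) ≤ P := by
    intro P hPp hBP u hu huu₁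
    have h1 : S.inf (fun v₀ => RingHom.ker (Phi L (u₁ * v₀))) ≤ P := by
      intro f hf
      exact main P hPp hBP u hu f
        (fun v₀ hv₀S => RingHom.mem_ker.1 (Submodule.mem_finsetInf.1 hf v₀ hv₀S))
    obtain ⟨v₀, hv₀S, hker⟩ := hPp.prod_le.1 (le_trans Ideal.prod_le_inf h1)
    have hbm : ∀ m ∈ sat L, wpow (u₁ * v₀) m = wpow u m := by
      intro m hm
      have hb : (monomial (posPart m) 1
          - monomial (posPart (-m)) ((wpow (u₁ * v₀) m : ℂˣ) : ℂ)) ∈ P :=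
        hker (by rw [RingHom.mem_ker]; exact ker_binom L (u₁ * v₀) hm)
      have hev := hu _ hb
      rw [map_sub, eval_monomial_units, eval_monomial_units, one_mul] at hev
      have hq : ((wpow u (ea (posPart (-m))) : ℂˣ) : ℂ) ≠ 0 := Units.ne_zero _
      have hval : ((wpow (u₁ * v₀) m : ℂˣ) : ℂ)
          = ((wpow u (ea (posPart m)) / wpow u (ea (posPart (-m))) : ℂˣ) : ℂ) := by
        push_cast
        rw [eq_div_iff hq]
        linear_combination -hev
      have h7 : wpow (u₁ * v₀) m
          = wpow u (ea (posPart m)) / wpow u (ea (posPart (-m))) := Units.ext hval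
      rw [h7, ← wpow_sub, ea_posPart_sub]
    intro f hf
    apply hker
    rw [RingHom.mem_ker]
    apply twist L u₁ (u₁ * v₀) f ?_ (RingHom.mem_ker.1 hf)
    intro m hm
    rw [hbm m hm, huu₁ m hm]
  have hQ₁ : RingHom.ker (Phi L u₁) ≤ P₁ := hQle P₁ hP₁p hBP₁ u₁ hv₁ (fun m _ => rfl)
  have hQ₂ : RingHom.ker (Phi L u₁) ≤ P₂ := hQle P₂ hP₂p hBP₂ u₂ hv₂ hτ
  have hBQ : Ideal.span B ≤ RingHom.ker (Phi L u₁) := by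
    rw [Ideal.span_le]
    intro g hg
    rw [SetLike.mem_coe, RingHom.mem_ker]
    rcases bin_struct g (hB g hg) u₁ (hvB₁ g hg) with rfl | ⟨a, b, c, e, hc, he, hab, rfl⟩
    · exact map_zero _
    · rw [map_add, Phi_monomial, Phi_monomial]
      have hd : ea a - ea b ∈ sat L :=
        le_sat L (Submodule.subset_span ⟨a, b, c, e, hc, he, hab, hg, rfl⟩)
      have hκ : ((Submodule.Quotient.mk (ea a)) : (Fin n → ℤ) ⧸ sat L)
          = Submodule.Quotient.mk (ea b) := (Submodule.Quotient.eq _).2 hd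
      rw [hκ, ← AddMonoidAlgebra.single_add]
      convert AddMonoidAlgebra.single_zero _
      have h8 := hvB₁ _ hg
      rw [eval_binom] at h8
      exact h8
  haveI hkerp : (RingHom.ker (Phi L u₁)).IsPrime := RingHom.ker_isPrime _
  have hP₁m : Minimal (fun q : Ideal (MvPolynomial (Fin n) ℂ) => q.IsPrime ∧ Ideal.span B ≤ q) P₁ := hP₁
  have hP₂m : Minimal (fun q : Ideal (MvPolynomial (Fin n) ℂ) => q.IsPrime ∧ Ideal.span B ≤ q) P₂ := hP₂
  have e₁ : P₁ = RingHom.ker (Phi L u₁) := hP₁m.eq_of_ge ⟨hkerp, hBQ⟩ hQ₁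
  have e₂ : P₂ = RingHom.ker (Phi L u₁) := hP₂m.eq_of_ge ⟨hkerp, hBQ⟩ hQ₂
  rw [e₁, e₂]

end BinUnique

/-- at most one minimal prime of the extension to ℂ of a real binomial
ideal has a zero in the open positive orthant. -/
theorem binomial_ideal_unique_positive_component {n : ℕ}
    (I : Ideal (MvPolynomial (Fin n) ℝ))
    (hbin : ∃ G : Set (MvPolynomial (Fin n) ℝ),
      I = Ideal.span G ∧ ∀ g ∈ G, g.support.card ≤ 2)
    (Ie : Ideal (MvPolynomial (Fin n) ℂ))
    (hIe : Ie = Ideal.map (MvPolynomial.map (algebraMap ℝ ℂ)) I)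
    (P₁ P₂ : Ideal (MvPolynomial (Fin n) ℂ))
    (hP₁ : P₁ ∈ Ie.minimalPrimes) (hP₂ : P₂ ∈ Ie.minimalPrimes)
    (h₁ : ∃ z : Fin n → ℝ, (∀ i, 0 < z i) ∧
      ∀ g ∈ P₁, MvPolynomial.eval (fun i => (z i : ℂ)) g = 0)
    (h₂ : ∃ z : Fin n → ℝ, (∀ i, 0 < z i) ∧
      ∀ g ∈ P₂, MvPolynomial.eval (fun i => (z i : ℂ)) g = 0) :
    P₁ = P₂ := by
  obtain ⟨G, hG, hGcard⟩ := hbin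
  obtain ⟨z₁, hz₁pos, hz₁⟩ := h₁
  obtain ⟨z₂, hz₂pos, hz₂⟩ := h₂
  set B : Set (MvPolynomial (Fin n) ℂ) := (MvPolynomial.map (algebraMap ℝ ℂ)) '' G with hB
  have hIeB : Ie = Ideal.span B := by rw [hIe, hG, Ideal.map_span]
  have hBcard : ∀ g ∈ B, g.support.card ≤ 2 := by
    rintro g ⟨g₀, hg₀, rfl⟩
    exact le_trans (Finset.card_le_card (MvPolynomial.support_map_subset _ _)) (hGcard g₀ hg₀)
  have hP₁' : P₁ ∈ (Ideal.span B).minimalPrimes := by rw [← hIeB]; exact hP₁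
  have hP₂' : P₂ ∈ (Ideal.span B).minimalPrimes := by rw [← hIeB]; exact hP₂
  set u₁ : Fin n → ℂˣ := fun i => Units.mk0 ((z₁ i : ℂ))
    (by exact_mod_cast (hz₁pos i).ne') with hu₁
  set u₂ : Fin n → ℂˣ := fun i => Units.mk0 ((z₂ i : ℂ))
    (by exact_mod_cast (hz₂pos i).ne') with hu₂
  apply BinUnique.key B hBcard P₁ P₂ hP₁' hP₂' u₁ u₂ (fun i => z₂ i / z₁ i)
    (fun i => div_pos (hz₂pos i) (hz₁pos i)) ?_ ?_ ?_
  · intro i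
    rw [Units.val_div_eq_div_val]
    push_cast
    rfl
  · exact hz₁
  · exact hz₂
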